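/- arXiv:math/0503536 — 4 statements merged into one kernel-verified Lean document; each statement's English description precedes it below -/
import Mathlib

section
/- Let X₁, …, X_m be independent nonnegative random variables, β > 0, b > 0, c₁, …, c_m > 0 with ∑_{i=1}^m c_i ≤ b, and suppose E[exp(β·X_i/c_i)] ≤ 2·exp((1 − ε/2)β) for each i, where 0 < ε. Let W = ∑_{i=1}^m X_i. Then E[(W − b)⁺] ≤ (b/β)·log(1 + 2·exp(−εβ/2)). -/
/-!
Writing `W = ∑ Xᵢ`, Jensen's inequality for `exp` with the weights `cᵢ / b` (the missing mass
`1 - ∑ cᵢ / b` placed at `0`) dominates `exp (β (W - b) / b)` by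
`G = exp (-β) (∑ (cᵢ / b) exp (β Xᵢ / cᵢ) + 1 - ∑ cᵢ / b)`, whose mean is at most
`2 exp (-ε β / 2)`. Since `u⁺ ≤ log (1 + exp u)` and `log (1 + ·)` is concave, its tangent line at
`E G` gives `E (W - b)⁺ ≤ (b / β) log (1 + E G)`.
-/

open MeasureTheory ProbabilityTheory

namespace Real

theorem log_le_log_add_sub_div {y z : ℝ} (hy : 0 < y) (hz : 0 < z) :
    log y ≤ log z + (y - z) / z := by
  have := log_le_sub_one_of_pos (div_pos hy hz)
  rw [log_div hy.ne' hz.ne', div_sub_one hz.ne'] at this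
  linarith

theorem max_zero_le_log_one_add_exp (u : ℝ) : max u 0 ≤ log (1 + exp u) := by
  refine max_le ?_ (log_nonneg (by linarith [exp_pos u]))
  calc u = log (exp u) := (log_exp u).symm
    _ ≤ log (1 + exp u) := log_le_log (exp_pos u) (by linarith)

theorem exp_sum_div_le {ι : Type*} [Fintype ι] {x c : ι → ℝ} {b : ℝ} (hc : ∀ i, 0 < c i)
    (hb : 0 < b) (hcb : ∑ i, c i ≤ b) :
    exp ((∑ i, x i) / b) ≤ ∑ i, c i / b * exp (x i / c i) + (1 - ∑ i, c i / b) := by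
  have hw1 : ∑ i, c i / b ≤ 1 := by rwa [← Finset.sum_div, div_le_one hb]
  have := convexOn_exp.map_add_sum_le (t := Finset.univ) (w := fun i => c i / b)
    (p := fun i => x i / c i) (v := 1 - ∑ i, c i / b) (q := 0)
    (fun i _ => (div_pos (hc i) hb).le) (by ring) (fun _ _ => Set.mem_univ _) (by linarith)
    (Set.mem_univ _)
  have hsum : ∑ i, c i / b * (x i / c i) = (∑ i, x i) / b := by
    rw [Finset.sum_div]
    exact Finset.sum_congr rfl fun i _ => by field_simp [(hc i).ne']
  simpa only [smul_eq_mul, mul_zero, zero_add, add_zero, exp_zero, mul_one, hsum, add_comm] using this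

end Real

open Real

section

variable {Ω : Type*} [MeasurableSpace Ω] {μ : Measure Ω} [IsProbabilityMeasure μ]

theorem one_le_integral_exp_of_nonneg {f : Ω → ℝ} (hf : ∀ ω, 0 ≤ f ω)
    (hint : Integrable (fun ω => exp (f ω)) μ) : 1 ≤ ∫ ω, exp (f ω) ∂μ := by
  simpa using integral_mono (integrable_const 1) hint fun ω => one_le_exp (hf ω)

theorem integral_sum_mul_add_one_sub_le {ι : Type*} [Fintype ι] {w : ι → ℝ} {F : ι → Ω → ℝ}
    {M : ℝ} (hw : ∀ i, 0 ≤ w i) (hw1 : ∑ i, w i ≤ 1) (hF : ∀ i, Integrable (F i) μ)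
    (hFM : ∀ i, ∫ ω, F i ω ∂μ ≤ M) (hM : 1 ≤ M) :
    ∫ ω, (∑ i, w i * F i ω + (1 - ∑ i, w i)) ∂μ ≤ M := by
  rw [integral_add (integrable_finsetSum _ fun i _ => (hF i).const_mul _) (integrable_const _),
    integral_finsetSum _ fun i _ => (hF i).const_mul _, integral_const, probReal_univ, one_smul]
  calc ∑ i, ∫ ω, w i * F i ω ∂μ + (1 - ∑ i, w i) ≤ ∑ i, w i * M + (1 - ∑ i, w i) * M := by
        gcongr with i
        · rw [integral_const_mul]; exact mul_le_mul_of_nonneg_left (hFM i) (hw i)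
        · nlinarith
    _ = M := by rw [← Finset.sum_mul]; ring

theorem integral_max_zero_le_log_one_add_integral {f G : Ω → ℝ} (hG : Integrable G μ)
    (hfG : ∀ ω, exp (f ω) ≤ G ω) :
    ∫ ω, max (f ω) 0 ∂μ ≤ log (1 + ∫ ω, G ω ∂μ) := by
  set a := ∫ ω, G ω ∂μ
  have hG0 : ∀ ω, 0 < G ω := fun ω => (exp_pos _).trans_le (hfG ω)
  have ha : 0 ≤ a := integral_nonneg fun ω => (hG0 ω).le
  have hpt : ∀ ω, max (f ω) 0 ≤ log (1 + a) + (G ω - a) / (1 + a) := fun ω =>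
    calc max (f ω) 0 ≤ log (1 + exp (f ω)) := max_zero_le_log_one_add_exp _
      _ ≤ log (1 + G ω) := log_le_log (by positivity) (by linarith [hfG ω])
      _ ≤ log (1 + a) + (1 + G ω - (1 + a)) / (1 + a) :=
        log_le_log_add_sub_div (by linarith [hG0 ω]) (by linarith)
      _ = _ := by rw [add_sub_add_left_eq_sub]
  have hGa : Integrable (fun ω => (G ω - a) / (1 + a)) μ :=
    (hG.sub (integrable_const a)).div_const _
  have hint : Integrable (fun ω => log (1 + a) + (G ω - a) / (1 + a)) μ :=
    (integrable_const _).add hGa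
  calc ∫ ω, max (f ω) 0 ∂μ ≤ ∫ ω, (log (1 + a) + (G ω - a) / (1 + a)) ∂μ :=
        integral_mono_of_nonneg (ae_of_all _ fun ω => le_max_right _ _) hint (ae_of_all _ hpt)
    _ = log (1 + a) := by
        rw [integral_add (integrable_const _) hGa,
          integral_div, integral_sub hG (integrable_const a)]
        simp [a]

theorem integral_max_zero_le_inv_mul_log_one_add_integral {f G : Ω → ℝ} {t : ℝ} (ht : 0 < t)
    (hG : Integrable G μ) (hfG : ∀ ω, exp (t * f ω) ≤ G ω) :
    ∫ ω, max (f ω) 0 ∂μ ≤ t⁻¹ * log (1 + ∫ ω, G ω ∂μ) := by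
  rw [le_inv_mul_iff₀ ht]
  calc t * ∫ ω, max (f ω) 0 ∂μ = ∫ ω, max (t * f ω) 0 ∂μ := by
        rw [← integral_const_mul]
        simp only [mul_max_of_nonneg _ _ ht.le, mul_zero]
    _ ≤ _ := integral_max_zero_le_log_one_add_integral hG hfG

end

theorem capacity_overflow_bound_general
    {Ω : Type*} [MeasurableSpace Ω] (μ : Measure Ω) [IsProbabilityMeasure μ]
    {m : ℕ} (X : Fin m → Ω → ℝ) (β b ε : ℝ) (c : Fin m → ℝ)
    (hβ : 0 < β) (hb : 0 < b) (hc : ∀ i, 0 < c i)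
    (hsum : ∑ i, c i ≤ b)
    (hXnn : ∀ i ω, 0 ≤ X i ω)
    (hint : ∀ i, Integrable (fun ω => Real.exp (β * X i ω / c i)) μ)
    (hKi : ∀ i, ∫ ω, Real.exp (β * X i ω / c i) ∂μ ≤ 2 * Real.exp ((1 - ε / 2) * β)) :
    ∫ ω, max ((∑ i, X i ω) - b) 0 ∂μ ≤
      (b / β) * Real.log (1 + 2 * Real.exp (-ε * β / 2)) := by
  rcases isEmpty_or_nonempty (Fin m) with hm | ⟨⟨i₀⟩⟩
  · simp only [Finset.univ_eq_empty, Finset.sum_empty, zero_sub, max_eq_right (neg_nonpos.2 hb.le),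
      integral_zero]
    exact mul_nonneg (by positivity) (log_nonneg (by linarith [exp_pos (-ε * β / 2)]))
  set G : Ω → ℝ := fun ω =>
    exp (-β) * (∑ i, c i / b * exp (β * X i ω / c i) + (1 - ∑ i, c i / b))
  have hG : Integrable G μ :=
    ((integrable_finsetSum _ fun i _ => (hint i).const_mul _).add (integrable_const _)).const_mul _
  have hWG : ∀ ω, exp (β / b * ((∑ i, X i ω) - b)) ≤ G ω := fun ω =>
    calc exp (β / b * ((∑ i, X i ω) - b)) = exp (-β) * exp ((∑ i, β * X i ω) / b) := by
          rw [← Finset.mul_sum, ← exp_add]; field_simp; ring_nf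
      _ ≤ G ω := mul_le_mul_of_nonneg_left (exp_sum_div_le hc hb hsum) (exp_pos _).le
  have hM : 1 ≤ 2 * exp ((1 - ε / 2) * β) :=
    (one_le_integral_exp_of_nonneg (fun ω => div_nonneg (mul_nonneg hβ.le (hXnn i₀ ω))
      (hc i₀).le) (hint i₀)).trans (hKi i₀)
  have hGK : ∫ ω, G ω ∂μ ≤ 2 * exp (-ε * β / 2) :=
    calc ∫ ω, G ω ∂μ ≤ exp (-β) * (2 * exp ((1 - ε / 2) * β)) := by
          rw [integral_const_mul]
          exact mul_le_mul_of_nonneg_left (integral_sum_mul_add_one_sub_le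
            (fun i => (div_pos (hc i) hb).le) (by rwa [← Finset.sum_div, div_le_one hb]) hint hKi
            hM) (exp_pos _).le
      _ = 2 * exp (-ε * β / 2) := by rw [mul_left_comm, ← exp_add]; ring_nf
  calc ∫ ω, max ((∑ i, X i ω) - b) 0 ∂μ ≤ (β / b)⁻¹ * log (1 + ∫ ω, G ω ∂μ) :=
        integral_max_zero_le_inv_mul_log_one_add_integral (by positivity) hG hWG
    _ ≤ (b / β) * log (1 + 2 * exp (-ε * β / 2)) := by
        have hG0 : 0 ≤ ∫ ω, G ω ∂μ := integral_nonneg fun ω => ((exp_pos _).trans_le (hWG ω)).le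
        rw [inv_div]
        exact mul_le_mul_of_nonneg_left (log_le_log (by linarith) (by linarith)) (by positivity)

theorem capacity_overflow_bound
    {Ω : Type*} [MeasurableSpace Ω] (μ : Measure Ω) [IsProbabilityMeasure μ]
    {m : ℕ} (X : Fin m → Ω → ℝ) (β b ε : ℝ) (c : Fin m → ℝ)
    (hβ : 0 < β) (hb : 0 < b) (hε : 0 < ε) (hc : ∀ i, 0 < c i)
    (hsum : ∑ i, c i ≤ b)
    (hXnn : ∀ i ω, 0 ≤ X i ω)
    (hXmeas : ∀ i, Measurable (X i))
    (hindep : iIndepFun X μ)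
    (hint : ∀ i, Integrable (fun ω => Real.exp (β * X i ω / c i)) μ)
    (hKi : ∀ i, ∫ ω, Real.exp (β * X i ω / c i) ∂μ ≤ 2 * Real.exp ((1 - ε / 2) * β)) :
    ∫ ω, max ((∑ i, X i ω) - b) 0 ∂μ ≤
      (b / β) * Real.log (1 + 2 * Real.exp (-ε * β / 2)) :=
  capacity_overflow_bound_general μ X β b ε c hβ hb hc hsum hXnn hint hKi
end

section
/- Consider the primal LP: maximize ∑_{i=1}^m r_i ρ_i α_i subject to ∑_{i=1}^m b_i ρ_i α_i ≤ b, 0 ≤ α_i ≤ 1 (all data positive), and its dual: minimize u·b + ∑_i v_i subject to v_i + b_i ρ_i u ≥ r_i ρ_i, v ≥ 0, u ≥ 0. If α* is primal optimal and (u*, v*) is dual optimal, then for all t ≥ 0, u*·b + ∑_{i=1}^m v_i*(1 − exp(−μ_i t)) ≤ ∑_{i=1}^m r_i ρ_i α_i* (1 − exp(−μ_i t)) + u*·b·exp(−μ_min·t), where μ_min = min_i μ_i. -/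
/-!
Eliminating `v`, a dual optimum `u*` minimises the convex piecewise-linear function
`φ(u) = u b + ∑ (g_i - f_i u)⁺` on `u ≥ 0` (with `f_i = b_i ρ_i`, `g_i = r_i ρ_i`). Its one-sided
slopes at `u*` say that the items with `g_i > f_i u*` fit into the budget and, when `u* > 0`,
together with the ties `g_i = f_i u*` they exhaust it. The greedy fractional knapsack built from
this is primal feasible with value `φ(u*)`, so there is no duality gap, and complementary
slackness gives `v_i* = (g_i - f_i u*) α_i*` and `u* ∑ f_i α_i* = u* b`. Substituting these, the
claim reduces to `u* ∑ f_i α_i* e^{-μ_i t} ≤ u* b e^{-μ_min t}`.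
-/

open Filter Topology

section Hinge

variable {c d u : ℝ}

theorem eventually_max_sub_mul_add (hc : 0 ≤ c) :
    ∀ᶠ ε in 𝓝[>] (0 : ℝ),
      max (d - c * (u + ε)) 0 = max (d - c * u) 0 - ε * (if c * u < d then c else 0) := by
  by_cases h : c * u < d
  · have hpos : ∀ᶠ ε in 𝓝 (0 : ℝ), 0 < d - c * (u + ε) :=
      continuousAt_const.eventually_lt (by fun_prop) (by simpa using h)
    filter_upwards [hpos.filter_mono nhdsWithin_le_nhds] with ε hε
    rw [max_eq_left hε.le, max_eq_left (by linarith), if_pos h]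
    ring
  · filter_upwards [self_mem_nhdsWithin] with ε (hε : 0 < ε)
    have : 0 ≤ c * ε := mul_nonneg hc hε.le
    rw [max_eq_right (by linarith), max_eq_right (by linarith), if_neg h]
    ring

theorem eventually_max_sub_mul_sub (hc : 0 ≤ c) :
    ∀ᶠ ε in 𝓝[>] (0 : ℝ),
      max (d - c * (u - ε)) 0 = max (d - c * u) 0 + ε * (if c * u ≤ d then c else 0) := by
  by_cases h : c * u ≤ d
  · filter_upwards [self_mem_nhdsWithin] with ε (hε : 0 < ε)
    have : 0 ≤ c * ε := mul_nonneg hc hε.le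
    rw [max_eq_left (by linarith), max_eq_left (by linarith), if_pos h]
    ring
  · have hneg : ∀ᶠ ε in 𝓝 (0 : ℝ), d - c * (u - ε) < 0 :=
      ContinuousAt.eventually_lt (by fun_prop) continuousAt_const (by simpa using h)
    filter_upwards [hneg.filter_mono nhdsWithin_le_nhds] with ε hε
    rw [max_eq_right hε.le, max_eq_right (by linarith), if_neg h]
    ring

end Hinge

section Knapsack

variable {ι : Type*}

structure IsKnapsackDualFeasible (f g : ι → ℝ) (u : ℝ) (v : ι → ℝ) : Prop where
  le_add : ∀ i, g i ≤ v i + f i * u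
  nonneg : ∀ i, 0 ≤ v i
  multiplier_nonneg : 0 ≤ u

theorem isKnapsackDualFeasible_max {f g : ι → ℝ} {u : ℝ} (hu : 0 ≤ u) :
    IsKnapsackDualFeasible f g u (fun i => max (g i - f i * u) 0) where
  le_add i := by linarith [le_max_left (g i - f i * u) 0]
  nonneg _ := le_max_right _ _
  multiplier_nonneg := hu

variable [Fintype ι]

structure IsKnapsackPrimalFeasible (f : ι → ℝ) (b : ℝ) (α : ι → ℝ) : Prop where
  sum_le : ∑ i, f i * α i ≤ b
  nonneg : ∀ i, 0 ≤ α i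
  le_one : ∀ i, α i ≤ 1

/-- The dual objective minimised over `v` for fixed `u`, i.e. with `v i = (g i - f i * u)⁺`. -/
def knapsackDual (f g : ι → ℝ) (b u : ℝ) : ℝ :=
  u * b + ∑ i, max (g i - f i * u) 0

variable {f g : ι → ℝ} {b u : ℝ}

theorem knapsackDual_le {v : ι → ℝ} (huv : IsKnapsackDualFeasible f g u v) :
    knapsackDual f g b u ≤ u * b + ∑ i, v i := by
  unfold knapsackDual
  gcongr with i
  exact max_le (by linarith [huv.le_add i]) (huv.nonneg i)

theorem eventually_knapsackDual_add (hf : ∀ i, 0 ≤ f i) :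
    ∀ᶠ ε in 𝓝[>] (0 : ℝ), knapsackDual f g b (u + ε) =
      knapsackDual f g b u + ε * (b - ∑ i with f i * u < g i, f i) := by
  filter_upwards [eventually_all.2 fun i => eventually_max_sub_mul_add (d := g i) (u := u) (hf i)]
    with ε hε
  simp only [knapsackDual, hε, Finset.sum_sub_distrib, ← Finset.mul_sum, Finset.sum_filter]
  ring

theorem eventually_knapsackDual_sub (hf : ∀ i, 0 ≤ f i) :
    ∀ᶠ ε in 𝓝[>] (0 : ℝ), knapsackDual f g b (u - ε) =
      knapsackDual f g b u - ε * (b - ∑ i with f i * u ≤ g i, f i) := by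
  filter_upwards [eventually_all.2 fun i => eventually_max_sub_mul_sub (d := g i) (u := u) (hf i)]
    with ε hε
  simp only [knapsackDual, hε, Finset.sum_add_distrib, ← Finset.mul_sum, Finset.sum_filter]
  ring

theorem sum_filter_lt_le_of_isMinOn (hf : ∀ i, 0 ≤ f i)
    (hmin : IsMinOn (knapsackDual f g b) (Set.Ici 0) u) (hu : 0 ≤ u) :
    ∑ i with f i * u < g i, f i ≤ b := by
  obtain ⟨ε, hε, hpos⟩ := ((eventually_knapsackDual_add hf).and self_mem_nhdsWithin).exists
  have hε0 : (0 : ℝ) < ε := hpos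
  have : knapsackDual f g b u ≤ knapsackDual f g b (u + ε) := hmin (add_nonneg hu hε0.le)
  rw [hε] at this
  nlinarith

theorem le_sum_filter_le_of_isMinOn (hf : ∀ i, 0 ≤ f i)
    (hmin : IsMinOn (knapsackDual f g b) (Set.Ici 0) u) (hu : 0 < u) :
    b ≤ ∑ i with f i * u ≤ g i, f i := by
  obtain ⟨ε, hε, hpos⟩ := ((eventually_knapsackDual_sub hf).and (Ioo_mem_nhdsGT hu)).exists
  have : knapsackDual f g b u ≤ knapsackDual f g b (u - ε) := hmin (sub_nonneg.2 hpos.2.le)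
  rw [hε] at this
  nlinarith [hpos.1]

theorem sum_filter_le_eq_add :
    ∑ i with f i * u ≤ g i, f i = ∑ i with f i * u < g i, f i + ∑ i with f i * u = g i, f i := by
  classical
  simp_rw [le_iff_lt_or_eq]
  rw [Finset.filter_or, Finset.sum_union (Finset.disjoint_filter.2 fun _ _ h => h.ne)]

/-- The greedy fractional knapsack: take every item with `g i > f i * u`, the fraction `θ` of
every item with `g i = f i * u`, and nothing else. -/
theorem exists_isKnapsackPrimalFeasible_eq_knapsackDual (hu : 0 ≤ u)
    (hlt : ∑ i with f i * u < g i, f i ≤ b) (hle : 0 < u → b ≤ ∑ i with f i * u ≤ g i, f i) :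
    ∃ α, IsKnapsackPrimalFeasible f b α ∧ ∑ i, g i * α i = knapsackDual f g b u := by
  set A := ∑ i with f i * u < g i, f i
  set B := ∑ i with f i * u = g i, f i
  obtain ⟨θ, hθ, hθb, hθu⟩ : ∃ θ ∈ Set.Icc (0 : ℝ) 1, A + θ * B ≤ b ∧ u * (A + θ * B) = u * b := by
    rcases hu.eq_or_lt with rfl | hu
    · exact ⟨0, by simp, by simpa using hlt, by simp⟩
    · have hAB := hle hu
      rw [sum_filter_le_eq_add] at hAB
      obtain ⟨θ, hθ, hθb⟩ := intermediate_value_Icc (f := fun θ => A + θ * B) zero_le_one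
        (by fun_prop) ⟨by simpa using hlt, by simpa using hAB⟩
      exact ⟨θ, hθ, hθb.le, congrArg (u * ·) hθb⟩
  let α i : ℝ := if f i * u < g i then 1 else if f i * u = g i then θ else 0
  have hfα : ∑ i, f i * α i = A + θ * B := by
    simp only [A, B, Finset.sum_filter, Finset.mul_sum, ← Finset.sum_add_distrib]
    refine Finset.sum_congr rfl fun i _ => ?_
    simp only [α]
    split_ifs <;> linarith
  have hgα (i) : g i * α i = max (g i - f i * u) 0 + u * (f i * α i) := by
    simp only [α]
    split_ifs with hlt heq
    · rw [max_eq_left (by linarith)]; ring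
    · rw [max_eq_right (by linarith), ← heq]; ring
    · rw [max_eq_right (by linarith)]; ring
  refine ⟨α, ⟨hfα ▸ hθb, fun i => ?_, fun i => ?_⟩, ?_⟩
  · simp only [α]; split_ifs <;> simp [hθ.1]
  · simp only [α]; split_ifs <;> simp [hθ.2]
  · simp only [hgα, Finset.sum_add_distrib, ← Finset.mul_sum, hfα, hθu, knapsackDual]
    ring

theorem knapsack_strong_duality (hf : ∀ i, 0 ≤ f i) {α v : ι → ℝ}
    (hαopt : ∀ α', IsKnapsackPrimalFeasible f b α' → ∑ i, g i * α' i ≤ ∑ i, g i * α i)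
    (huv : IsKnapsackDualFeasible f g u v)
    (huvopt : ∀ u' v', IsKnapsackDualFeasible f g u' v' → u * b + ∑ i, v i ≤ u' * b + ∑ i, v' i) :
    u * b + ∑ i, v i ≤ ∑ i, g i * α i := by
  have hmin : IsMinOn (knapsackDual f g b) (Set.Ici 0) u := fun u' (hu' : 0 ≤ u') =>
    (knapsackDual_le huv).trans (huvopt u' _ (isKnapsackDualFeasible_max hu'))
  have hu := huv.multiplier_nonneg
  obtain ⟨α', hα', hα'val⟩ := exists_isKnapsackPrimalFeasible_eq_knapsackDual hu
    (sum_filter_lt_le_of_isMinOn hf hmin hu) (le_sum_filter_le_of_isMinOn hf hmin)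
  calc u * b + ∑ i, v i ≤ knapsackDual f g b u := huvopt u _ (isKnapsackDualFeasible_max hu)
    _ = ∑ i, g i * α' i := hα'val.symm
    _ ≤ ∑ i, g i * α i := hαopt α' hα'

theorem IsKnapsackPrimalFeasible.complementary_slackness {α v : ι → ℝ}
    (hα : IsKnapsackPrimalFeasible f b α) (huv : IsKnapsackDualFeasible f g u v)
    (hgap : u * b + ∑ i, v i ≤ ∑ i, g i * α i) :
    (∀ i, v i = g i * α i - u * (f i * α i)) ∧ u * ∑ i, f i * α i = u * b := by
  have hg (i : ι) (_ : i ∈ Finset.univ) : g i * α i ≤ (v i + f i * u) * α i :=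
    mul_le_mul_of_nonneg_right (huv.le_add i) (hα.nonneg i)
  have hv (i : ι) (_ : i ∈ Finset.univ) : v i * α i ≤ v i :=
    mul_le_of_le_one_right (huv.nonneg i) (hα.le_one i)
  have hu : u * ∑ i, f i * α i ≤ u * b := mul_le_mul_of_nonneg_left hα.sum_le huv.multiplier_nonneg
  have hsplit : ∑ i, (v i + f i * u) * α i = ∑ i, v i * α i + u * ∑ i, f i * α i := by
    rw [Finset.mul_sum, ← Finset.sum_add_distrib]
    exact Finset.sum_congr rfl fun i _ => by ring
  have hsum_g := Finset.sum_le_sum hg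
  have hsum_v := Finset.sum_le_sum hv
  have hg_eq := (Finset.sum_eq_sum_iff_of_le hg).1 (by linarith)
  have hv_eq := (Finset.sum_eq_sum_iff_of_le hv).1 (by linarith)
  refine ⟨fun i => ?_, by linarith⟩
  linear_combination -hv_eq i (Finset.mem_univ i) - hg_eq i (Finset.mem_univ i)

theorem mul_add_sum_mul_one_sub_le {v α E : ι → ℝ} {M : ℝ} (hu : 0 ≤ u)
    (hv : ∀ i, v i = g i * α i - u * (f i * α i)) (hub : u * ∑ i, f i * α i = u * b)
    (hfα : ∀ i, 0 ≤ f i * α i) (hE : ∀ i, E i ≤ M) :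
    u * b + ∑ i, v i * (1 - E i) ≤ ∑ i, g i * α i * (1 - E i) + u * b * M := by
  have hexpand : u * b + ∑ i, v i * (1 - E i) =
      ∑ i, g i * α i * (1 - E i) + u * ∑ i, f i * α i * E i := by
    have hterm (i : ι) : v i * (1 - E i) =
        g i * α i * (1 - E i) - u * (f i * α i) + u * (f i * α i * E i) := by
      rw [hv]; ring
    simp only [hterm, Finset.sum_add_distrib, Finset.sum_sub_distrib, ← Finset.mul_sum, hub]
    ring
  have hdecay : ∑ i, f i * α i * E i ≤ (∑ i, f i * α i) * M := by
    rw [Finset.sum_mul]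
    exact Finset.sum_le_sum fun i _ => mul_le_mul_of_nonneg_left (hE i) (hfα i)
  calc u * b + ∑ i, v i * (1 - E i)
      = ∑ i, g i * α i * (1 - E i) + u * ∑ i, f i * α i * E i := hexpand
    _ ≤ ∑ i, g i * α i * (1 - E i) + u * ((∑ i, f i * α i) * M) := by gcongr
    _ = ∑ i, g i * α i * (1 - E i) + u * b * M := by rw [← mul_assoc, hub]

end Knapsack

theorem complementary_slackness_chain_general
    {m : ℕ} (r ρ b' μ : Fin m → ℝ) (b : ℝ)
    (αstar : Fin m → ℝ) (ustar : ℝ) (vstar : Fin m → ℝ)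
    (hρ : ∀ i, 0 < ρ i) (hb' : ∀ i, 0 < b' i)
    -- α* is primal feasible
    (hpf1 : ∑ i, b' i * ρ i * αstar i ≤ b)
    (hpf2 : ∀ i, 0 ≤ αstar i) (hpf3 : ∀ i, αstar i ≤ 1)
    -- α* is primal optimal
    (hpopt : ∀ α : Fin m → ℝ, (∑ i, b' i * ρ i * α i ≤ b) →
        (∀ i, 0 ≤ α i) → (∀ i, α i ≤ 1) →
        ∑ i, r i * ρ i * α i ≤ ∑ i, r i * ρ i * αstar i)
    -- (u*, v*) is dual feasible
    (hdf1 : ∀ i, r i * ρ i ≤ vstar i + b' i * ρ i * ustar)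
    (hdf2 : ∀ i, 0 ≤ vstar i) (hdf3 : 0 ≤ ustar)
    -- (u*, v*) is dual optimal
    (hdopt : ∀ (u : ℝ) (v : Fin m → ℝ),
        (∀ i, r i * ρ i ≤ v i + b' i * ρ i * u) → (∀ i, 0 ≤ v i) → 0 ≤ u →
        ustar * b + ∑ i, vstar i ≤ u * b + ∑ i, v i) :
    ∀ t : ℝ, 0 ≤ t →
      ustar * b + ∑ i, vstar i * (1 - Real.exp (-(μ i) * t)) ≤
        (∑ i, r i * ρ i * αstar i * (1 - Real.exp (-(μ i) * t))) +
          ustar * b * Real.exp (-(⨅ i, μ i) * t) := by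
  intro t ht
  have hf (i : Fin m) : 0 ≤ b' i * ρ i := (mul_pos (hb' i) (hρ i)).le
  have hα : IsKnapsackPrimalFeasible (fun i => b' i * ρ i) b αstar := ⟨hpf1, hpf2, hpf3⟩
  have huv : IsKnapsackDualFeasible (fun i => b' i * ρ i) (fun i => r i * ρ i) ustar vstar :=
    ⟨hdf1, hdf2, hdf3⟩
  have hgap := knapsack_strong_duality hf (fun α h => hpopt α h.sum_le h.nonneg h.le_one) huv
    (fun u v h => hdopt u v h.le_add h.nonneg h.multiplier_nonneg)
  obtain ⟨hv, hub⟩ := hα.complementary_slackness huv hgap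
  refine mul_add_sum_mul_one_sub_le hdf3 hv hub (fun i => mul_nonneg (hf i) (hpf2 i)) fun i => ?_
  gcongr
  exact ciInf_le (Finite.bddBelow_range μ) i

theorem complementary_slackness_chain
    {m : ℕ} (r ρ b' μ : Fin m → ℝ) (b : ℝ)
    (αstar : Fin m → ℝ) (ustar : ℝ) (vstar : Fin m → ℝ)
    (hr : ∀ i, 0 < r i) (hρ : ∀ i, 0 < ρ i) (hb' : ∀ i, 0 < b' i)
    (hμ : ∀ i, 0 < μ i) (hb : 0 < b)
    -- α* is primal feasible
    (hpf1 : ∑ i, b' i * ρ i * αstar i ≤ b)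
    (hpf2 : ∀ i, 0 ≤ αstar i) (hpf3 : ∀ i, αstar i ≤ 1)
    -- α* is primal optimal
    (hpopt : ∀ α : Fin m → ℝ, (∑ i, b' i * ρ i * α i ≤ b) →
        (∀ i, 0 ≤ α i) → (∀ i, α i ≤ 1) →
        ∑ i, r i * ρ i * α i ≤ ∑ i, r i * ρ i * αstar i)
    -- (u*, v*) is dual feasible
    (hdf1 : ∀ i, r i * ρ i ≤ vstar i + b' i * ρ i * ustar)
    (hdf2 : ∀ i, 0 ≤ vstar i) (hdf3 : 0 ≤ ustar)
    -- (u*, v*) is dual optimal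
    (hdopt : ∀ (u : ℝ) (v : Fin m → ℝ),
        (∀ i, r i * ρ i ≤ v i + b' i * ρ i * u) → (∀ i, 0 ≤ v i) → 0 ≤ u →
        ustar * b + ∑ i, vstar i ≤ u * b + ∑ i, v i) :
    ∀ t : ℝ, 0 ≤ t →
      ustar * b + ∑ i, vstar i * (1 - Real.exp (-(μ i) * t)) ≤
        (∑ i, r i * ρ i * αstar i * (1 - Real.exp (-(μ i) * t))) +
          ustar * b * Real.exp (-(⨅ i, μ i) * t) :=
  complementary_slackness_chain_general r ρ b' μ b αstar ustar vstar hρ hb' hpf1 hpf2 hpf3 hpopt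
    hdf1 hdf2 hdf3 hdopt
end

section
/- Consider the LP: maximize ∑_{i=1}^m r_i ρ_i α_i subject to ∑_{i=1}^m b_i ρ_i α_i ≤ b and 0 ≤ α_i ≤ 1 − exp(−μ_i t) for each i (all data positive, t ≥ 0). Its optimal value R*(t) satisfies R*(t) ≤ ∑_{i=1}^m r_i ρ_i α_i*(1 − exp(−μ_i t)) + u*·b·exp(−μ_min·t), where α* is an optimal solution of the steady-state LP (box constraints α_i ≤ 1), (u*, v*) is an optimal solution of its dual (minimize ub + ∑ v_i subject to v_i + b_i ρ_i u ≥ r_i ρ_i, u, v ≥ 0), and μ_min = min_i μ_i. -/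
open Finset

/-- Strong duality for the steady-state (fractional knapsack) LP, proved by
constructing an explicit dual solution from an optimal primal solution. -/
lemma strong_duality_knapsack {m : ℕ} (c a : Fin m → ℝ) (b : ℝ)
    (hc : ∀ i, 0 < c i) (ha : ∀ i, 0 < a i)
    (αs : Fin m → ℝ)
    (hpf1 : ∑ i, a i * αs i ≤ b) (hpf2 : ∀ i, 0 ≤ αs i) (hpf3 : ∀ i, αs i ≤ 1)
    (hpopt : ∀ α : Fin m → ℝ, (∑ i, a i * α i ≤ b) → (∀ i, 0 ≤ α i) → (∀ i, α i ≤ 1) →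
        ∑ i, c i * α i ≤ ∑ i, c i * αs i) :
    ∃ u : ℝ, ∃ v : Fin m → ℝ, (∀ i, c i ≤ v i + a i * u) ∧ (∀ i, 0 ≤ v i) ∧ 0 ≤ u ∧
      u * b + ∑ i, v i = ∑ i, c i * αs i := by
  classical
  by_cases hall : ∀ i, αs i = 1
  · refine ⟨0, c, fun i => by nlinarith [ha i], fun i => (hc i).le, le_refl 0, ?_⟩
    simp only [zero_mul, zero_add]
    exact (Finset.sum_congr rfl fun i _ => by rw [hall i, mul_one]).symm
  · push_neg at hall
    obtain ⟨k0, hk0⟩ := hall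
    have hk0lt : αs k0 < 1 := lt_of_le_of_ne (hpf3 k0) hk0
    -- exchange argument
    have hxchg : ∀ i j, αs i < 1 → 0 < αs j → c i * a j ≤ c j * a i := by
      intro i j hi hj
      by_contra hlt
      push_neg at hlt
      have hij : i ≠ j := by
        rintro rfl; exact absurd hlt (lt_irrefl _)
      set ε : ℝ := min ((1 - αs i) * a i) (αs j * a j) with hεdef
      have hε : 0 < ε := lt_min (mul_pos (by linarith) (ha i)) (mul_pos hj (ha j))
      have hε1 : ε ≤ (1 - αs i) * a i := min_le_left _ _
      have hε2 : ε ≤ αs j * a j := min_le_right _ _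
      set α : Fin m → ℝ := fun k =>
        if k = i then αs i + ε / a i else if k = j then αs j - ε / a j else αs k with hα
      have hαi : α i = αs i + ε / a i := by simp [hα]
      have hαj : α j = αs j - ε / a j := by simp [hα, hij.symm]
      have hαk : ∀ k, k ≠ i → k ≠ j → α k = αs k := by
        intro k h1 h2; simp [hα, h1, h2]
      have hub : ∀ k, α k ≤ 1 := by
        intro k
        by_cases h1 : k = i
        · subst h1; rw [hαi]
          have : ε / a k ≤ 1 - αs k := (div_le_iff₀ (ha k)).mpr hε1
          linarith
        by_cases h2 : k = j
        · subst h2; rw [hαj]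
          have : 0 ≤ ε / a k := le_of_lt (div_pos hε (ha k))
          linarith [hpf3 k]
        · rw [hαk k h1 h2]; exact hpf3 k
      have hlb : ∀ k, 0 ≤ α k := by
        intro k
        by_cases h1 : k = i
        · subst h1; rw [hαi]
          have : 0 ≤ ε / a k := le_of_lt (div_pos hε (ha k))
          linarith [hpf2 k]
        by_cases h2 : k = j
        · subst h2; rw [hαj]
          have : ε / a k ≤ αs k := (div_le_iff₀ (ha k)).mpr hε2
          linarith
        · rw [hαk k h1 h2]; exact hpf2 k
      have hsum : ∑ l, a l * α l = ∑ l, a l * αs l := by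
        have h2 : ∑ l, (a l * α l - a l * αs l)
            = (a i * α i - a i * αs i) + (a j * α j - a j * αs j) :=
          Finset.sum_eq_add_of_mem i j (mem_univ i) (mem_univ j) hij
            (by rintro l _ ⟨h1, h2⟩; rw [hαk l h1 h2]; ring)
        have hcan : ∀ (x : ℝ) (l : Fin m), a l * (x / a l) = x := fun x l => by
          rw [mul_comm]; exact div_mul_cancel₀ x (ha l).ne'
        have h3 : a i * α i - a i * αs i = ε := by
          rw [hαi, mul_add, hcan]; ring
        have h4 : a j * α j - a j * αs j = -ε := by
          rw [hαj, mul_sub, hcan]; ring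
        rw [Finset.sum_sub_distrib] at h2
        linarith
      have hobj : ∑ l, c l * αs l < ∑ l, c l * α l := by
        have h2 : ∑ l, (c l * α l - c l * αs l)
            = (c i * α i - c i * αs i) + (c j * α j - c j * αs j) :=
          Finset.sum_eq_add_of_mem i j (mem_univ i) (mem_univ j) hij
            (by rintro l _ ⟨h1, h2⟩; rw [hαk l h1 h2]; ring)
        have h3 : c i * α i - c i * αs i = c i / a i * ε := by
          rw [hαi]; field_simp; ring
        have h4 : c j * α j - c j * αs j = -(c j / a j * ε) := by
          rw [hαj]; field_simp; ring
        have h5 : c j / a j < c i / a i := (div_lt_div_iff₀ (ha j) (ha i)).mpr hlt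
        have h6 : c j / a j * ε < c i / a i * ε := by nlinarith
        rw [Finset.sum_sub_distrib] at h2
        linarith
      have := hpopt α (by rw [hsum]; exact hpf1) hlb hub
      linarith
    -- set of non-saturated indices and the dual multiplier
    set T : Finset (Fin m) := Finset.univ.filter (fun i => αs i < 1) with hT
    have hTne : T.Nonempty := ⟨k0, by simp [hT, hk0lt]⟩
    set u₀ : ℝ := T.sup' hTne (fun i => c i / a i) with hu₀
    obtain ⟨k, hkT, hk⟩ := Finset.exists_mem_eq_sup' hTne (fun i => c i / a i)
    have hklt : αs k < 1 := (Finset.mem_filter.mp hkT).2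
    have hu₀pos : 0 < u₀ := by
      rw [hu₀, hk]; exact div_pos (hc k) (ha k)
    -- budget constraint is tight
    have hbudget : ∑ i, a i * αs i = b := by
      by_contra hne
      have hlt : ∑ i, a i * αs i < b := lt_of_le_of_ne hpf1 hne
      set ε : ℝ := min (1 - αs k) ((b - ∑ i, a i * αs i) / a k) with hεdef
      have hε : 0 < ε :=
        lt_min (by linarith) (div_pos (by linarith) (ha k))
      have hε1 : ε ≤ 1 - αs k := min_le_left _ _
      have hε2 : ε ≤ (b - ∑ i, a i * αs i) / a k := min_le_right _ _
      set α : Fin m → ℝ := fun j => if j = k then αs k + ε else αs j with hα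
      have hαkk : α k = αs k + ε := by simp [hα]
      have hαo : ∀ l, l ≠ k → α l = αs l := by intro l hl; simp [hα, hl]
      have hsum : ∑ l, a l * α l = ∑ l, a l * αs l + a k * ε := by
        have h2 : ∑ l, (a l * α l - a l * αs l) = a k * α k - a k * αs k :=
          Finset.sum_eq_single_of_mem k (mem_univ k)
            (by intro l _ hl; rw [hαo l hl]; ring)
        rw [Finset.sum_sub_distrib] at h2
        rw [hαkk] at h2
        have : a k * (αs k + ε) - a k * αs k = a k * ε := by ring
        linarith
      have hfeas : ∑ l, a l * α l ≤ b := by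
        rw [hsum]
        have h9 : ε * a k ≤ b - ∑ i, a i * αs i := (le_div_iff₀ (ha k)).mp hε2
        linarith [mul_comm (a k) ε]
      have hub : ∀ l, α l ≤ 1 := by
        intro l
        by_cases hl : l = k
        · subst hl; rw [hαkk]; linarith
        · rw [hαo l hl]; exact hpf3 l
      have hlb : ∀ l, 0 ≤ α l := by
        intro l
        by_cases hl : l = k
        · subst hl; rw [hαkk]; linarith [hpf2 l]
        · rw [hαo l hl]; exact hpf2 l
      have hobj : ∑ l, c l * αs l < ∑ l, c l * α l := by
        have h2 : ∑ l, (c l * α l - c l * αs l) = c k * α k - c k * αs k :=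
          Finset.sum_eq_single_of_mem k (mem_univ k)
            (by intro l _ hl; rw [hαo l hl]; ring)
        rw [Finset.sum_sub_distrib] at h2
        rw [hαkk] at h2
        nlinarith [hc k]
      have := hpopt α hfeas hlb hub
      linarith
    -- the dual variables
    set v₀ : Fin m → ℝ := fun i => max (c i - u₀ * a i) 0 with hv₀def
    have hv₀ : ∀ i, v₀ i = (c i - u₀ * a i) * αs i := by
      intro i
      rcases lt_trichotomy (c i - u₀ * a i) 0 with h | h | h
      · have hα0 : αs i = 0 := by
          by_contra h0
          have hpos : 0 < αs i := lt_of_le_of_ne (hpf2 i) (Ne.symm h0)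
          have hx := hxchg k i hklt hpos
          have h1 : u₀ ≤ c i / a i := by
            rw [hu₀, hk]
            exact (div_le_div_iff₀ (ha k) (ha i)).mpr hx
          have h2 : u₀ * a i ≤ c i := by
            have := (le_div_iff₀ (ha i)).mp h1
            linarith
          linarith
        rw [hα0, mul_zero]
        simp [hv₀def, max_eq_right h.le]
      · simp [hv₀def, h]
      · have hα1 : αs i = 1 := by
          by_contra h1
          have hilt : αs i < 1 := lt_of_le_of_ne (hpf3 i) h1
          have hiT : i ∈ T := by simp [hT, hilt]
          have h2 : c i / a i ≤ u₀ := Finset.le_sup' (fun i => c i / a i) hiT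
          have h3 : c i ≤ u₀ * a i := by
            have := (div_le_iff₀ (ha i)).mp h2
            linarith
          linarith
        rw [hα1, mul_one]
        simp [hv₀def, max_eq_left h.le]
    refine ⟨u₀, v₀, ?_, ?_, hu₀pos.le, ?_⟩
    · intro i
      have : c i - u₀ * a i ≤ v₀ i := le_max_left _ _
      linarith
    · intro i; exact le_max_right _ _
    · calc u₀ * b + ∑ i, v₀ i
          = u₀ * (∑ i, a i * αs i) + ∑ i, (c i - u₀ * a i) * αs i := by
            rw [hbudget]
            exact congrArg _ (Finset.sum_congr rfl fun i _ => hv₀ i)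
        _ = ∑ i, c i * αs i := by
            rw [Finset.mul_sum, ← Finset.sum_add_distrib]
            exact Finset.sum_congr rfl fun i _ => by ring

theorem transient_lp_dual_upper_bound
    {m : ℕ} (r ρ b' μ : Fin m → ℝ) (b t : ℝ)
    (αstar : Fin m → ℝ) (ustar : ℝ) (vstar : Fin m → ℝ)
    (hr : ∀ i, 0 < r i) (hρ : ∀ i, 0 < ρ i) (hb' : ∀ i, 0 < b' i)
    (hμ : ∀ i, 0 < μ i) (hb : 0 < b) (ht : 0 ≤ t)
    -- α* is an optimal solution of the steady-state LP
    (hpf1 : ∑ i, b' i * ρ i * αstar i ≤ b)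
    (hpf2 : ∀ i, 0 ≤ αstar i) (hpf3 : ∀ i, αstar i ≤ 1)
    (hpopt : ∀ α : Fin m → ℝ, (∑ i, b' i * ρ i * α i ≤ b) →
        (∀ i, 0 ≤ α i) → (∀ i, α i ≤ 1) →
        ∑ i, r i * ρ i * α i ≤ ∑ i, r i * ρ i * αstar i)
    -- (u*, v*) is an optimal solution of the steady-state dual LP
    (hdf1 : ∀ i, r i * ρ i ≤ vstar i + b' i * ρ i * ustar)
    (hdf2 : ∀ i, 0 ≤ vstar i) (hdf3 : 0 ≤ ustar)
    (hdopt : ∀ (u : ℝ) (v : Fin m → ℝ),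
        (∀ i, r i * ρ i ≤ v i + b' i * ρ i * u) → (∀ i, 0 ≤ v i) → 0 ≤ u →
        ustar * b + ∑ i, vstar i ≤ u * b + ∑ i, v i) :
    sSup {w : ℝ | ∃ α : Fin m → ℝ,
        (∑ i, b' i * ρ i * α i ≤ b) ∧
        (∀ i, 0 ≤ α i) ∧ (∀ i, α i ≤ 1 - Real.exp (-(μ i) * t)) ∧
        w = ∑ i, r i * ρ i * α i} ≤
      (∑ i, r i * ρ i * αstar i * (1 - Real.exp (-(μ i) * t))) +
        ustar * b * Real.exp (-(⨅ i, μ i) * t) := by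
  have he1 : ∀ i, Real.exp (-(μ i) * t) ≤ 1 := fun i =>
    Real.exp_le_one_iff.mpr (by nlinarith [hμ i] : -(μ i) * t ≤ 0)
  apply Real.sSup_le
  · rintro w ⟨α, hα1, hα2, hα3, rfl⟩
    -- Step A: weak duality for the transient LP
    have stepA : ∑ i, r i * ρ i * α i
        ≤ ∑ i, vstar i * (1 - Real.exp (-(μ i) * t)) + ustar * b := by
      have h1 : ∑ i, r i * ρ i * α i
          ≤ ∑ i, (vstar i * α i + ustar * (b' i * ρ i * α i)) :=
        Finset.sum_le_sum fun i _ => by nlinarith [hdf1 i, hα2 i]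
      have h2 : ∑ i, vstar i * α i ≤ ∑ i, vstar i * (1 - Real.exp (-(μ i) * t)) :=
        Finset.sum_le_sum fun i _ => mul_le_mul_of_nonneg_left (hα3 i) (hdf2 i)
      have h4 : ustar * ∑ i, b' i * ρ i * α i ≤ ustar * b :=
        mul_le_mul_of_nonneg_left hα1 hdf3
      rw [Finset.sum_add_distrib, ← Finset.mul_sum] at h1
      linarith
    -- Strong duality for the steady-state LP
    obtain ⟨u₀, v₀, hd1, hd2, hd3, hval⟩ :=
      strong_duality_knapsack (fun i => r i * ρ i) (fun i => b' i * ρ i) b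
        (fun i => mul_pos (hr i) (hρ i)) (fun i => mul_pos (hb' i) (hρ i))
        αstar hpf1 hpf2 hpf3 hpopt
    have hSD : ustar * b + ∑ i, vstar i ≤ ∑ i, r i * ρ i * αstar i := by
      have := hdopt u₀ v₀ hd1 hd2 hd3
      linarith [hval]
    -- Complementary slackness from the zero duality gap
    have e1 : ∑ i, vstar i * (1 - αstar i)
        + ∑ i, (vstar i + b' i * ρ i * ustar - r i * ρ i) * αstar i
        = ∑ i, vstar i + ustar * (∑ i, b' i * ρ i * αstar i)
          - ∑ i, r i * ρ i * αstar i := by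
      rw [Finset.mul_sum, ← Finset.sum_add_distrib, ← Finset.sum_add_distrib,
        ← Finset.sum_sub_distrib]
      exact Finset.sum_congr rfl fun i _ => by ring
    have hAb : ∑ i, b' i * ρ i * αstar i ≤ b := hpf1
    have hX : 0 ≤ ustar * (b - ∑ i, b' i * ρ i * αstar i) :=
      mul_nonneg hdf3 (by linarith)
    have hY : ∀ i, 0 ≤ vstar i * (1 - αstar i) := fun i =>
      mul_nonneg (hdf2 i) (by linarith [hpf3 i])
    have hZ : ∀ i, 0 ≤ (vstar i + b' i * ρ i * ustar - r i * ρ i) * αstar i := fun i =>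
      mul_nonneg (by linarith [hdf1 i]) (hpf2 i)
    have hYs : 0 ≤ ∑ i, vstar i * (1 - αstar i) :=
      Finset.sum_nonneg fun i _ => hY i
    have hZs : 0 ≤ ∑ i, (vstar i + b' i * ρ i * ustar - r i * ρ i) * αstar i :=
      Finset.sum_nonneg fun i _ => hZ i
    have hX0 : ustar * (b - ∑ i, b' i * ρ i * αstar i) = 0 := by nlinarith
    have hY0 : ∀ i, vstar i * (1 - αstar i) = 0 := by
      have hs : ∑ i, vstar i * (1 - αstar i) = 0 := by nlinarith
      intro i
      exact (Finset.sum_eq_zero_iff_of_nonneg fun j _ => hY j).mp hs i (mem_univ i)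
    have hZ0 : ∀ i, (vstar i + b' i * ρ i * ustar - r i * ρ i) * αstar i = 0 := by
      have hs : ∑ i, (vstar i + b' i * ρ i * ustar - r i * ρ i) * αstar i = 0 := by nlinarith
      intro i
      exact (Finset.sum_eq_zero_iff_of_nonneg fun j _ => hZ j).mp hs i (mem_univ i)
    -- comparison of exponentials
    have heE : ∀ i, Real.exp (-(μ i) * t) ≤ Real.exp (-(⨅ j, μ j) * t) := by
      intro i
      apply Real.exp_le_exp.mpr
      have h1 : (⨅ j, μ j) ≤ μ i := ciInf_le (Set.finite_range μ).bddBelow i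
      nlinarith
    -- key identity from complementary slackness
    have keyeq : ∑ i, r i * ρ i * αstar i * (1 - Real.exp (-(μ i) * t))
        = ∑ i, vstar i * (1 - Real.exp (-(μ i) * t))
          + ustar * ∑ i, b' i * ρ i * αstar i * (1 - Real.exp (-(μ i) * t)) := by
      rw [Finset.mul_sum, ← Finset.sum_add_distrib]
      refine Finset.sum_congr rfl fun i _ => ?_
      have hcs : r i * ρ i * αstar i = vstar i + ustar * (b' i * ρ i * αstar i) := by
        linear_combination (-1 : ℝ) * hY0 i + (-1 : ℝ) * hZ0 i
      linear_combination (1 - Real.exp (-(μ i) * t)) * hcs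
    have hterm : ustar * b * (1 - Real.exp (-(⨅ j, μ j) * t))
        ≤ ustar * ∑ i, b' i * ρ i * αstar i * (1 - Real.exp (-(μ i) * t)) := by
      have h6 : ∑ i, b' i * ρ i * αstar i * (1 - Real.exp (-(⨅ j, μ j) * t))
          ≤ ∑ i, b' i * ρ i * αstar i * (1 - Real.exp (-(μ i) * t)) :=
        Finset.sum_le_sum fun i _ =>
          mul_le_mul_of_nonneg_left (by linarith [heE i])
            (mul_nonneg (mul_pos (hb' i) (hρ i)).le (hpf2 i))
      have h7 : ∑ i, b' i * ρ i * αstar i * (1 - Real.exp (-(⨅ j, μ j) * t))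
          = (∑ i, b' i * ρ i * αstar i) * (1 - Real.exp (-(⨅ j, μ j) * t)) :=
        (Finset.sum_mul _ _ _).symm
      have h8 : ustar * b = ustar * ∑ i, b' i * ρ i * αstar i := by
        linear_combination hX0
      calc ustar * b * (1 - Real.exp (-(⨅ j, μ j) * t))
          = ustar * ((∑ i, b' i * ρ i * αstar i) * (1 - Real.exp (-(⨅ j, μ j) * t))) := by
            rw [← mul_assoc, ← h8]
        _ = ustar * ∑ i, b' i * ρ i * αstar i * (1 - Real.exp (-(⨅ j, μ j) * t)) := by
            rw [h7]
        _ ≤ _ := mul_le_mul_of_nonneg_left h6 hdf3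
    linarith [stepA, keyeq, hterm]
  · apply add_nonneg
    · exact Finset.sum_nonneg fun i _ =>
        mul_nonneg (mul_nonneg (mul_pos (hr i) (hρ i)).le (hpf2 i)) (by linarith [he1 i])
    · positivity
end

section
/- Let S = {x ∈ ℝ^m : 0 ≤ x ≤ ρ, Dx ≤ h} with D ∈ ℝ^{s×m}, h ≥ 0, ρ > 0, and suppose there exists x ∈ S with Dx < h (componentwise strict). Define D⁺ and D⁻ by D⁺_{ij} = max(D_{ij}, 0), D⁻_{ij} = max(−D_{ij}, 0), and the lifted set S̃ = {(x,y) : 0 ≤ x ≤ ρ, 0 ≤ y ≤ ρ, D⁺x + D⁻y ≤ h + D⁻ρ}. Then γ* := min_{(x,y) ∈ S̃} max_{1≤j≤s} (d_j⁺x + d_j⁻y)/(h_j + d_j⁻ρ) satisfies γ* < 1. -/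
open Finset

theorem lifted_violation_lt_one
    {s m : ℕ} [NeZero s] (D : Fin s → Fin m → ℝ) (h : Fin s → ℝ) (ρ : Fin m → ℝ)
    (hh : ∀ j, 0 ≤ h j) (hρ : ∀ i, 0 < ρ i)
    (hpos : ∀ j, 0 < h j + ∑ i, max (-(D j i)) 0 * ρ i)
    (hslater : ∃ x : Fin m → ℝ, (∀ i, 0 ≤ x i) ∧ (∀ i, x i ≤ ρ i) ∧
        (∀ j, ∑ i, D j i * x i < h j)) :
    sInf {γ : ℝ | ∃ x y : Fin m → ℝ,
        (∀ i, 0 ≤ x i) ∧ (∀ i, x i ≤ ρ i) ∧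
        (∀ i, 0 ≤ y i) ∧ (∀ i, y i ≤ ρ i) ∧
        (∀ j, ∑ i, max (D j i) 0 * x i + ∑ i, max (-(D j i)) 0 * y i ≤
          h j + ∑ i, max (-(D j i)) 0 * ρ i) ∧
        γ = ⨆ j, (∑ i, max (D j i) 0 * x i + ∑ i, max (-(D j i)) 0 * y i) /
          (h j + ∑ i, max (-(D j i)) 0 * ρ i)} < 1 := by
  obtain ⟨x, hx0, hxρ, hxD⟩ := hslater
  set y : Fin m → ℝ := fun i => ρ i - x i with hy
  have key : ∀ j, ∑ i, max (D j i) 0 * x i + ∑ i, max (-(D j i)) 0 * y i <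
      h j + ∑ i, max (-(D j i)) 0 * ρ i := by
    intro j
    have : ∑ i, max (D j i) 0 * x i + ∑ i, max (-(D j i)) 0 * y i =
        ∑ i, D j i * x i + ∑ i, max (-(D j i)) 0 * ρ i := by
      simp only [hy]
      rw [← Finset.sum_add_distrib, ← Finset.sum_add_distrib]
      apply Finset.sum_congr rfl
      intro i _
      rcases le_total (D j i) 0 with hle | hle
      · rw [max_eq_right hle, max_eq_left (by linarith)]
        ring
      · rw [max_eq_left hle, max_eq_right (by linarith)]
        ring
    rw [this]
    have := hxD j
    linarith
  set γ : ℝ := ⨆ j, (∑ i, max (D j i) 0 * x i + ∑ i, max (-(D j i)) 0 * y i) /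
      (h j + ∑ i, max (-(D j i)) 0 * ρ i) with hγ
  have hγ1 : γ < 1 := by
    obtain ⟨j0, hj0⟩ := Finite.exists_max (fun j : Fin s =>
      (∑ i, max (D j i) 0 * x i + ∑ i, max (-(D j i)) 0 * y i) /
        (h j + ∑ i, max (-(D j i)) 0 * ρ i))
    refine lt_of_le_of_lt (ciSup_le hj0) ?_
    rw [div_lt_one (hpos j0)]
    exact key j0
  have hmem : γ ∈ {γ : ℝ | ∃ x y : Fin m → ℝ,
        (∀ i, 0 ≤ x i) ∧ (∀ i, x i ≤ ρ i) ∧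
        (∀ i, 0 ≤ y i) ∧ (∀ i, y i ≤ ρ i) ∧
        (∀ j, ∑ i, max (D j i) 0 * x i + ∑ i, max (-(D j i)) 0 * y i ≤
          h j + ∑ i, max (-(D j i)) 0 * ρ i) ∧
        γ = ⨆ j, (∑ i, max (D j i) 0 * x i + ∑ i, max (-(D j i)) 0 * y i) /
          (h j + ∑ i, max (-(D j i)) 0 * ρ i)} := by
    refine ⟨x, y, hx0, hxρ, ?_, ?_, fun j => (key j).le, rfl⟩
    · intro i; simp only [hy]; linarith [hxρ i]
    · intro i; simp only [hy]; linarith [hx0 i]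
  by_cases hbdd : BddBelow {γ : ℝ | ∃ x y : Fin m → ℝ,
        (∀ i, 0 ≤ x i) ∧ (∀ i, x i ≤ ρ i) ∧
        (∀ i, 0 ≤ y i) ∧ (∀ i, y i ≤ ρ i) ∧
        (∀ j, ∑ i, max (D j i) 0 * x i + ∑ i, max (-(D j i)) 0 * y i ≤
          h j + ∑ i, max (-(D j i)) 0 * ρ i) ∧
        γ = ⨆ j, (∑ i, max (D j i) 0 * x i + ∑ i, max (-(D j i)) 0 * y i) /
          (h j + ∑ i, max (-(D j i)) 0 * ρ i)}
  · exact lt_of_le_of_lt (csInf_le hbdd hmem) hγ1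
  · rw [Real.sInf_of_not_bddBelow hbdd]; norm_num
end
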